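/- Let k be a field of characteristic not equal to 2, let d ≥ 1, and let ε ∈ {1, −1}. Let Ω_ε = [[0, J],[εJ, 0]], θ_ε(g) = Ω_ε⁻¹ g⁻ᵀ Ω_ε, x = [[0, J],[I_d, 0]], η = x·θ_ε(x)⁻¹, and define ψ(g) = η · θ_ε(g) · η⁻¹. Let U denote the set of upper-triangular unipotent 2d×2d matrices over k. Then a matrix g belongs to U ∩ ψ(U) (that is, g ∈ U and g = ψ(u) for some u ∈ U) if and only if g = [[I_d, M],[0, I_d]] for some d×d matrix M. -/
import Mathlib


open Matrix

/-- The `d × d` antidiagonal identity matrix `J`. -/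
def Jmat (k : Type) [Field k] (d : ℕ) : Matrix (Fin d) (Fin d) k :=
  Matrix.of fun i j => if (i : ℕ) + (j : ℕ) + 1 = d then 1 else 0

/-- The linear position (0-based) of an index of a `2d × 2d` matrix whose index
type is `Fin d ⊕ Fin d`. -/
def idxNat {d : ℕ} : Fin d ⊕ Fin d → ℕ :=
  Sum.elim (fun i => (i : ℕ)) (fun i => d + (i : ℕ))

section Aux
variable {k : Type} [Field k] {d : ℕ}

lemma Jmat_transpose : (Jmat k d)ᵀ = Jmat k d := by
  ext i j
  simp only [Jmat, transpose_apply, Matrix.of_apply]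
  congr 1
  simp only [eq_iff_iff]
  omega

lemma Jmat_mul_Jmat : Jmat k d * Jmat k d = 1 := by
  ext i j
  rw [Matrix.mul_apply]
  have hi : (i : ℕ) < d := i.isLt
  have key : ∀ l : Fin d, Jmat k d i l * Jmat k d l j
      = if l = (⟨d - 1 - (i : ℕ), by omega⟩ : Fin d) ∧ i = j then 1 else 0 := by
    intro l
    simp only [Jmat, Matrix.of_apply]
    by_cases h1 : (i : ℕ) + (l : ℕ) + 1 = d
    · by_cases h2 : (l : ℕ) + (j : ℕ) + 1 = d
      · rw [if_pos h1, if_pos h2, if_pos ⟨by rw [Fin.ext_iff]; simp; omega,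
          by rw [Fin.ext_iff]; omega⟩, one_mul]
      · rw [if_neg h2, mul_zero, if_neg]
        rintro ⟨hl, hij⟩
        rw [Fin.ext_iff] at hl hij
        simp at hl
        omega
    · rw [if_neg h1, zero_mul, if_neg]
      rintro ⟨hl, hij⟩
      rw [Fin.ext_iff] at hl
      simp at hl
      omega
  simp_rw [key]
  by_cases hij : i = j
  · simp [hij, Matrix.one_apply]
  · simp [hij, Matrix.one_apply]

lemma idxNat_eq (s : Fin d ⊕ Fin d) : idxNat s = ((finSumFinEquiv s : Fin (d + d)) : ℕ) := by
  cases s <;> simp [idxNat] <;> omega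

lemma det_one_of_tri (D : Matrix (Fin d) (Fin d) k) (h1 : ∀ i, D i i = 1)
    (h2 : ∀ i j, j < i → D i j = 0) : D.det = 1 := by
  have hbt : D.BlockTriangular id := fun i j h => h2 i j h
  rw [Matrix.det_of_upperTriangular hbt]
  simp [h1]

lemma det_one_of_unip (u : Matrix (Fin d ⊕ Fin d) (Fin d ⊕ Fin d) k)
    (h1 : ∀ i, u i i = 1) (h2 : ∀ i j, idxNat j < idxNat i → u i j = 0) : u.det = 1 := by
  have e := (finSumFinEquiv (m := d) (n := d)).symm
  rw [← Matrix.det_submatrix_equiv_self (finSumFinEquiv (m := d) (n := d)).symm u]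
  rw [Matrix.det_of_upperTriangular]
  · apply Finset.prod_eq_one
    intro i _
    exact h1 _
  · intro i j hij
    apply h2
    rw [idxNat_eq, idxNat_eq]
    simpa using hij

lemma tri_pair (P D : Matrix (Fin d) (Fin d) k)
    (hP1 : ∀ i, P i i = 1) (hP2 : ∀ i j, j < i → P i j = 0)
    (hD1 : ∀ i, D i i = 1) (hD2 : ∀ i j, j < i → D i j = 0)
    (h : Dᵀ * P = 1) : P = 1 ∧ D = 1 := by
  have hbt : D.BlockTriangular id := fun i j h => hD2 i j h
  have hdet : D.det = 1 := det_one_of_tri D hD1 hD2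
  haveI : Invertible D := D.invertibleOfIsUnitDet (by simp [hdet])
  have hinv : D⁻¹.BlockTriangular id := blockTriangular_inv_of_blockTriangular hbt
  have hP : P = D⁻¹ᵀ := by
    rw [Matrix.transpose_nonsing_inv]
    exact (Matrix.inv_eq_right_inv h).symm
  have hPone : P = 1 := by
    ext i j
    rcases lt_trichotomy i j with hlt | heq | hgt
    · rw [hP, Matrix.transpose_apply, hinv hlt, Matrix.one_apply_ne (ne_of_lt hlt)]
    · subst heq
      rw [hP1, Matrix.one_apply_eq]
    · rw [hP2 i j hgt, Matrix.one_apply_ne (ne_of_gt hgt)]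
  refine ⟨hPone, ?_⟩
  have hDT : Dᵀ = 1 := by rw [← h, hPone, Matrix.mul_one]
  calc D = Dᵀᵀ := (Matrix.transpose_transpose D).symm
    _ = 1 := by rw [hDT, Matrix.transpose_one]
end Aux

/-- with `Ω_ε = [[0,J],[εJ,0]]`, `θ_ε(g) = Ω_ε⁻¹ g⁻ᵀ Ω_ε`,
`x = [[0,J],[I,0]]`, `η = x·θ_ε(x)⁻¹` and `ψ(g) = η·θ_ε(g)·η⁻¹`,
a matrix `g` lies in `U ∩ ψ(U)` (`U` = upper-triangular unipotent matrices)
if and only if `g = [[I,M],[0,I]]` for some `d × d` matrix `M`. -/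
theorem stmt4 (k : Type) [Field k] (hchar : (2 : k) ≠ 0) (d : ℕ) (hd : 1 ≤ d)
    (ε : k) (hε : ε = 1 ∨ ε = -1)
    (Ω x η : Matrix (Fin d ⊕ Fin d) (Fin d ⊕ Fin d) k)
    (hΩ : Ω = fromBlocks 0 (Jmat k d) (ε • Jmat k d) 0)
    (hx : x = fromBlocks 0 (Jmat k d) (1 : Matrix (Fin d) (Fin d) k) 0)
    (hη : η = x * (Ω⁻¹ * (xᵀ)⁻¹ * Ω)⁻¹)
    (g : Matrix (Fin d ⊕ Fin d) (Fin d ⊕ Fin d) k) :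
    (((∀ i, g i i = 1) ∧ ∀ i j, idxNat j < idxNat i → g i j = 0) ∧
      ∃ u : Matrix (Fin d ⊕ Fin d) (Fin d ⊕ Fin d) k,
        ((∀ i, u i i = 1) ∧ ∀ i j, idxNat j < idxNat i → u i j = 0) ∧
        g = η * (Ω⁻¹ * (uᵀ)⁻¹ * Ω) * η⁻¹) ↔
    ∃ M : Matrix (Fin d) (Fin d) k,
      g = fromBlocks (1 : Matrix (Fin d) (Fin d) k) M 0 (1 : Matrix (Fin d) (Fin d) k) := by
  have hε2 : ε * ε = 1 := by rcases hε with h | h <;> rw [h] <;> ring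
  have hJJ : Jmat k d * Jmat k d = 1 := Jmat_mul_Jmat
  have hJT : (Jmat k d)ᵀ = Jmat k d := Jmat_transpose
  have hΩinv : Ω⁻¹ = fromBlocks 0 (ε • Jmat k d) (Jmat k d) 0 := by
    apply Matrix.inv_eq_right_inv
    rw [hΩ, fromBlocks_multiply]
    simp [Matrix.smul_mul, Matrix.mul_smul, smul_smul, hε2, hJJ]
  have hxT : xᵀ = fromBlocks 0 (1 : Matrix (Fin d) (Fin d) k) (Jmat k d) 0 := by
    rw [hx, fromBlocks_transpose]
    simp [hJT]
  have hxTinv : (xᵀ)⁻¹ = x := by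
    apply Matrix.inv_eq_right_inv
    rw [hxT, hx, fromBlocks_multiply]
    simp [hJJ]
  have hX : Ω⁻¹ * (xᵀ)⁻¹ * Ω = fromBlocks 0 (ε • 1) (ε • Jmat k d) 0 := by
    rw [hΩinv, hxTinv, hx, hΩ, fromBlocks_multiply, fromBlocks_multiply]
    simp [Matrix.smul_mul, Matrix.mul_smul, hJJ]
  have hXinv : (Ω⁻¹ * (xᵀ)⁻¹ * Ω)⁻¹ = fromBlocks 0 (ε • Jmat k d) (ε • 1) 0 := by
    apply Matrix.inv_eq_right_inv
    rw [hX, fromBlocks_multiply]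
    simp [Matrix.smul_mul, Matrix.mul_smul, smul_smul, hε2, hJJ]
  have hηv : η = fromBlocks (ε • Jmat k d) 0 0 (ε • Jmat k d) := by
    rw [hη, hXinv, hx, fromBlocks_multiply]
    simp [Matrix.mul_smul]
  have hηinv : η⁻¹ = η := by
    apply Matrix.inv_eq_right_inv
    rw [hηv, fromBlocks_multiply]
    simp [Matrix.smul_mul, Matrix.mul_smul, smul_smul, hε2, hJJ]
  have hηΩ : η * Ω⁻¹ = fromBlocks 0 1 (ε • (1 : Matrix (Fin d) (Fin d) k)) 0 := by
    rw [hηv, hΩinv, fromBlocks_multiply]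
    simp [Matrix.smul_mul, Matrix.mul_smul, smul_smul, hε2, hJJ]
  have hΩη : Ω * η = fromBlocks 0 (ε • (1 : Matrix (Fin d) (Fin d) k)) 1 0 := by
    rw [hΩ, hηv, fromBlocks_multiply]
    simp [Matrix.smul_mul, Matrix.mul_smul, smul_smul, hε2, hJJ]
  have key : ∀ W : Matrix (Fin d ⊕ Fin d) (Fin d ⊕ Fin d) k,
      η * (Ω⁻¹ * W * Ω) * η⁻¹ =
        fromBlocks 0 1 (ε • (1 : Matrix (Fin d) (Fin d) k)) 0 * W *
          fromBlocks 0 (ε • (1 : Matrix (Fin d) (Fin d) k)) 1 0 := by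
    intro W
    rw [hηinv, ← hηΩ, ← hΩη]
    simp only [Matrix.mul_assoc]
  have hSS' : (fromBlocks 0 (ε • (1 : Matrix (Fin d) (Fin d) k)) 1 0) *
      fromBlocks 0 1 (ε • (1 : Matrix (Fin d) (Fin d) k)) 0 = 1 := by
    rw [fromBlocks_multiply]
    simp [Matrix.smul_mul, Matrix.mul_smul, smul_smul, hε2]
  constructor
  · rintro ⟨⟨hg1, hg2⟩, u, ⟨hu1, hu2⟩, hgu⟩
    set P : Matrix (Fin d) (Fin d) k := Matrix.of fun i j => g (Sum.inl i) (Sum.inl j) with hPdef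
    set Q : Matrix (Fin d) (Fin d) k := Matrix.of fun i j => g (Sum.inl i) (Sum.inr j) with hQdef
    set R : Matrix (Fin d) (Fin d) k := Matrix.of fun i j => g (Sum.inr i) (Sum.inr j) with hRdef
    set A : Matrix (Fin d) (Fin d) k := Matrix.of fun i j => u (Sum.inl i) (Sum.inl j) with hAdef
    set B : Matrix (Fin d) (Fin d) k := Matrix.of fun i j => u (Sum.inl i) (Sum.inr j) with hBdef
    set D : Matrix (Fin d) (Fin d) k := Matrix.of fun i j => u (Sum.inr i) (Sum.inr j) with hDdef
    have hlow : ∀ (v : Matrix (Fin d ⊕ Fin d) (Fin d ⊕ Fin d) k),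
        (∀ i j, idxNat j < idxNat i → v i j = 0) →
        ∀ (i j : Fin d), v (Sum.inr i) (Sum.inl j) = 0 := by
      intro v hv i j
      apply hv
      show (j : ℕ) < d + (i : ℕ)
      exact lt_of_lt_of_le j.isLt (Nat.le_add_right d i)
    have hgblk : g = fromBlocks P Q 0 R := by
      ext i j
      cases i with
      | inl i => cases j with
        | inl j => simp [hPdef]
        | inr j => simp [hQdef]
      | inr i => cases j with
        | inl j => simp [hlow g hg2 i j]
        | inr j => simp [hRdef]
    have hublk : u = fromBlocks A B 0 D := by
      ext i j
      cases i with
      | inl i => cases j with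
        | inl j => simp [hAdef]
        | inr j => simp [hBdef]
      | inr i => cases j with
        | inl j => simp [hlow u hu2 i j]
        | inr j => simp [hDdef]
    have hudet : IsUnit uᵀ.det := by
      rw [Matrix.det_transpose, det_one_of_unip u hu1 hu2]
      exact isUnit_one
    have hstep : uᵀ * (fromBlocks 0 (ε • (1 : Matrix (Fin d) (Fin d) k)) 1 0 * g) =
        fromBlocks 0 (ε • (1 : Matrix (Fin d) (Fin d) k)) 1 0 := by
      rw [hgu, key]
      have hassoc : fromBlocks 0 (ε • (1 : Matrix (Fin d) (Fin d) k)) 1 0 *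
          (fromBlocks 0 1 (ε • (1 : Matrix (Fin d) (Fin d) k)) 0 * (uᵀ)⁻¹ *
            fromBlocks 0 (ε • (1 : Matrix (Fin d) (Fin d) k)) 1 0) =
          (fromBlocks 0 (ε • (1 : Matrix (Fin d) (Fin d) k)) 1 0 *
            fromBlocks 0 1 (ε • (1 : Matrix (Fin d) (Fin d) k)) 0) * (uᵀ)⁻¹ *
            fromBlocks 0 (ε • (1 : Matrix (Fin d) (Fin d) k)) 1 0 := by
        simp only [Matrix.mul_assoc]
      rw [hassoc, hSS', Matrix.one_mul, ← Matrix.mul_assoc,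
        Matrix.mul_nonsing_inv _ hudet, Matrix.one_mul]
    rw [hublk, hgblk, fromBlocks_transpose, fromBlocks_multiply, fromBlocks_multiply] at hstep
    simp only [Matrix.transpose_zero, Matrix.mul_zero, Matrix.zero_mul, Matrix.mul_one,
      Matrix.one_mul, add_zero, zero_add, smul_zero, Matrix.mul_smul, Matrix.smul_mul] at hstep
    rw [Matrix.fromBlocks_inj] at hstep
    obtain ⟨-, h12, h21, -⟩ := hstep
    have hAR : Aᵀ * R = 1 := by
      have := congrArg (fun m => ε • m) h12
      simpa [smul_smul, hε2] using this
    have hPup : (∀ i, P i i = 1) ∧ ∀ i j : Fin d, j < i → P i j = 0 :=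
      ⟨fun i => hg1 (Sum.inl i), fun i j h => hg2 (Sum.inl i) (Sum.inl j) h⟩
    have hRup : (∀ i, R i i = 1) ∧ ∀ i j : Fin d, j < i → R i j = 0 :=
      ⟨fun i => hg1 (Sum.inr i), fun i j h => hg2 (Sum.inr i) (Sum.inr j)
        (Nat.add_lt_add_left h d)⟩
    have hAup : (∀ i, A i i = 1) ∧ ∀ i j : Fin d, j < i → A i j = 0 :=
      ⟨fun i => hu1 (Sum.inl i), fun i j h => hu2 (Sum.inl i) (Sum.inl j) h⟩
    have hDup : (∀ i, D i i = 1) ∧ ∀ i j : Fin d, j < i → D i j = 0 :=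
      ⟨fun i => hu1 (Sum.inr i), fun i j h => hu2 (Sum.inr i) (Sum.inr j)
        (Nat.add_lt_add_left h d)⟩
    obtain ⟨hPone, -⟩ := tri_pair P D hPup.1 hPup.2 hDup.1 hDup.2 h21
    obtain ⟨hRone, -⟩ := tri_pair R A hRup.1 hRup.2 hAup.1 hAup.2 hAR
    exact ⟨Q, by rw [hgblk, hPone, hRone]⟩
  · rintro ⟨M, rfl⟩
    refine ⟨⟨?_, ?_⟩, fromBlocks 1 (-(ε • Mᵀ)) 0 1, ⟨?_, ?_⟩, ?_⟩
    · intro i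
      cases i with
      | inl i => simp
      | inr i => simp
    · intro i j hij
      cases i with
      | inl i => cases j with
        | inl j =>
          have : (j : ℕ) < (i : ℕ) := hij
          simp [Matrix.one_apply_ne (Fin.ne_of_val_ne (by omega) : i ≠ j)]
        | inr j =>
          exact absurd hij (by have := i.isLt; simp [idxNat]; omega)
      | inr i => cases j with
        | inl j => simp
        | inr j =>
          have : d + (j : ℕ) < d + (i : ℕ) := hij
          simp [Matrix.one_apply_ne (Fin.ne_of_val_ne (by omega) : i ≠ j)]
    · intro i
      cases i with
      | inl i => simp
      | inr i => simp
    · intro i j hij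
      cases i with
      | inl i => cases j with
        | inl j =>
          have : (j : ℕ) < (i : ℕ) := hij
          simp [Matrix.one_apply_ne (Fin.ne_of_val_ne (by omega) : i ≠ j)]
        | inr j =>
          exact absurd hij (by have := i.isLt; simp [idxNat]; omega)
      | inr i => cases j with
        | inl j => simp
        | inr j =>
          have : d + (j : ℕ) < d + (i : ℕ) := hij
          simp [Matrix.one_apply_ne (Fin.ne_of_val_ne (by omega) : i ≠ j)]
    · have htr : (fromBlocks 1 (-(ε • Mᵀ)) 0 1 : Matrix (Fin d ⊕ Fin d) (Fin d ⊕ Fin d) k)ᵀ =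
          fromBlocks 1 0 (-(ε • M)) 1 := by
        rw [fromBlocks_transpose]
        simp
      have hinvv : ((fromBlocks 1 (-(ε • Mᵀ)) 0 1 :
          Matrix (Fin d ⊕ Fin d) (Fin d ⊕ Fin d) k)ᵀ)⁻¹ = fromBlocks 1 0 (ε • M) 1 := by
        rw [htr]
        apply Matrix.inv_eq_right_inv
        rw [fromBlocks_multiply]
        simp
      rw [key, hinvv, fromBlocks_multiply, fromBlocks_multiply]
      simp [Matrix.smul_mul, Matrix.mul_smul, smul_smul, hε2]
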